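/- arXiv:1409.5327 — 4 statements merged into one kernel-verified Lean document; each statement's English description precedes it below -/
import Mathlib

section
/- Kelly's lemma conditions for the Store-Forward network: (i) for all states s ≠ s', π(s) q(s, s') = π(s') q^R(s', s); (ii) for every state s = (Q, γ), the total outgoing rates of the forward and reversed chains agree: ∑_{s' ≠ s} q(s, s') = ∑_{s' ≠ s} q^R(s, s') = ∑_{r ∈ R} a_r + ∑_{j : Q_j ≥ 1} σ^SF_j(Q). -/
/-!
Every enabled forward move is undone by exactly one enabled reversed move: an arrival on route
`r` by the reversed service at the first queue of `r`, a service moving a packet from `j` to the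
next queue `k` by the reversed service at `k`, and a departure from the last queue of `r` by a
reversed arrival on `r`. This matches the forward moves `s → s'` bijectively with the reversed
moves `s' → s`, so condition (i) holds termwise, and along a matched pair both flows reduce to
`π(u) a_r = π(u') σ_k(Q(u'))` for a state `u'` obtained from `u` by adding one route-`r` packet
to queue `k`: the packet contributes the factor `a_r` to `π`, and `σ_k(Q(u')) = Φ(Q(u)) / Φ(Q(u'))`.
Condition (ii) only needs that no enabled move leaves the state unchanged.
-/

open scoped BigOperators Classical

noncomputable section

/-- The Store-Forward normalizing constant `Φ(Q)`: the (finite) sum over arrays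
`m = (m l j)` of nonnegative integers with `m l j = 0` whenever `A l j = 0` and
`∑ l, m l j = Q j` for every `j`, of
`∏ l, [(m_l)! / ∏ j (m l j)!] * ∏ j (A l j)^(m l j)`, where `m_l = ∑ j, m l j`. -/
def Phi {J L : Type*} [Fintype J] [Fintype L] (A : L → J → ℝ) (Q : J → ℕ) : ℝ :=
  ∑' m : L → J → ℕ,
    if (∀ l j, A l j = 0 → m l j = 0) ∧ (∀ j, ∑ l, m l j = Q j) then
      ∏ l, (((∑ j, m l j).factorial : ℝ) / ∏ j, ((m l j).factorial : ℝ)) *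
        ∏ j, A l j ^ m l j
    else 0

/-- The Store-Forward service rate `σ^SF_j(Q) = Φ(Q - e_j) / Φ(Q)`. -/
def sigmaSF {J L : Type*} [Fintype J] [Fintype L] [DecidableEq J]
    (A : L → J → ℝ) (Q : J → ℕ) (j : J) : ℝ :=
  Phi A (Function.update Q j (Q j - 1)) / Phi A Q

/-- The queue on route `r` following queue `j`, if any. -/
def nextQ {J R : Type*} [DecidableEq J] (route : R → List J) (r : R) (j : J) :
    Option J :=
  (route r)[(route r).idxOf j + 1]?

/-- The queue on route `r` preceding queue `j`, if any. -/
def prevQ {J R : Type*} [DecidableEq J] (route : R → List J) (r : R) (j : J) :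
    Option J :=
  if (route r).idxOf j = 0 then none
  else (route r)[(route r).idxOf j - 1]?

/-- A state of the FIFO routed Store-Forward network: `s j` is the list of route classes
of the packets in queue `j`, the head of the list being the front of the queue (so the
queue length vector is `Q j = (s j).length`). -/
def Admissible {J R : Type*} (route : R → List J) (s : J → List R) : Prop :=
  ∀ j, ∀ r ∈ s j, j ∈ route r

/-- Forward transition (i): a new route-`r` packet joins the back of the first queue
of `r`. -/
def arrState {J R : Type*} [DecidableEq J] (route : R → List J)
    (s : J → List R) (r : R) : J → List R :=
  match (route r).head? with
  | none => s
  | some j => Function.update s j (s j ++ [r])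

/-- Forward transition (ii): the front packet of queue `j`, of route `r = γ_j(1)`, is
removed from queue `j` and appended to the back of the next queue of `r` after `j`
(or departs if `j` is the last queue of `r`). -/
def serveState {J R : Type*} [DecidableEq J] [DecidableEq R] (route : R → List J)
    (s : J → List R) (j : J) : J → List R :=
  match (s j).head? with
  | none => s
  | some r =>
    let s₁ := Function.update s j (s j).tail
    match nextQ route r j with
    | none => s₁
    | some k => Function.update s₁ k (s₁ k ++ [r])

/-- Reversed transition (i): a new route-`r` packet joins the front of the last queue
of `r`. -/
def arrStateR {J R : Type*} [DecidableEq J] (route : R → List J)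
    (s : J → List R) (r : R) : J → List R :=
  match (route r).getLast? with
  | none => s
  | some j => Function.update s j (r :: s j)

/-- Reversed transition (ii): the back packet of queue `j` (position `Q j`), of route
`r = γ_j(Q j)`, is removed from queue `j` and placed at the front of the queue preceding
`j` on `r` (or departs if `j` is the first queue of `r`). -/
def serveStateR {J R : Type*} [DecidableEq J] [DecidableEq R] (route : R → List J)
    (s : J → List R) (j : J) : J → List R :=
  match (s j).getLast? with
  | none => s
  | some r =>
    let s₁ := Function.update s j (s j).dropLast
    match prevQ route r j with
    | none => s₁
    | some k => Function.update s₁ k (r :: s₁ k)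

/-- The forward transition rate `q(s, s')` of the FIFO routed Store-Forward network. -/
def qRate {J L R : Type*} [Fintype J] [Fintype L] [Fintype R]
    [DecidableEq J] [DecidableEq R]
    (A : L → J → ℝ) (route : R → List J) (a : R → ℝ) (s s' : J → List R) : ℝ :=
  (∑ r : R, if arrState route s r = s' then a r else 0) +
    ∑ j : J, if s j ≠ [] ∧ serveState route s j = s'
      then sigmaSF A (fun i => (s i).length) j else 0

/-- The time-reversed transition rate `q^R(s, s')`. -/
def qRateR {J L R : Type*} [Fintype J] [Fintype L] [Fintype R]
    [DecidableEq J] [DecidableEq R]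
    (A : L → J → ℝ) (route : R → List J) (a : R → ℝ) (s s' : J → List R) : ℝ :=
  (∑ r : R, if arrStateR route s r = s' then a r else 0) +
    ∑ j : J, if s j ≠ [] ∧ serveStateR route s j = s'
      then sigmaSF A (fun i => (s i).length) j else 0

/-- The measure `π(Q, γ) = Φ(Q) ∏_j ∏_{k=1}^{Q_j} a_{γ_j(k)}`. -/
def piSF {J L R : Type*} [Fintype J] [Fintype L] (A : L → J → ℝ) (a : R → ℝ)
    (s : J → List R) : ℝ :=
  Phi A (fun j => (s j).length) * ∏ j, ((s j).map a).prod

section JumpRate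
variable {X ι κ : Type*} [DecidableEq X] [Fintype ι] [Fintype κ]

def jumpRate (move : X → ι → X) (w : X → ι → ℝ) (x y : X) : ℝ :=
  ∑ m, if move x m = y then w x m else 0

theorem jumpRate_eq_sum_filter (move : X → ι → X) (w : X → ι → ℝ) (x y : X) :
    jumpRate move w x y = ∑ m with move x m = y ∧ w x m ≠ 0, w x m := by
  rw [Finset.sum_filter, jumpRate]
  refine Finset.sum_congr rfl fun m _ => ?_
  by_cases h : w x m = 0 <;> simp [h]

theorem mul_jumpRate_eq_of_reversal {p : X → Prop} (π : X → ℝ)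
    (fwd : X → ι → X) (w : X → ι → ℝ) (rev : X → κ → X) (wR : X → κ → ℝ)
    (e : X → ι → κ) (e' : X → κ → ι)
    (hfwd : ∀ x m, p x → w x m ≠ 0 →
      rev (fwd x m) (e x m) = x ∧ wR (fwd x m) (e x m) ≠ 0 ∧ e' (fwd x m) (e x m) = m)
    (hrev : ∀ y m, p y → wR y m ≠ 0 →
      fwd (rev y m) (e' y m) = y ∧ w (rev y m) (e' y m) ≠ 0 ∧ e (rev y m) (e' y m) = m)
    (hbal : ∀ x m, p x → w x m ≠ 0 → π x * w x m = π (fwd x m) * wR (fwd x m) (e x m))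
    {x y : X} (hx : p x) (hy : p y) :
    π x * jumpRate fwd w x y = π y * jumpRate rev wR y x := by
  rw [jumpRate_eq_sum_filter, jumpRate_eq_sum_filter, Finset.mul_sum, Finset.mul_sum]
  refine Finset.sum_nbij' (e x) (e' y) ?_ ?_ ?_ ?_ ?_ <;>
    simp only [Finset.mem_filter, Finset.mem_univ, true_and] <;> rintro m ⟨rfl, hm⟩
  · exact (hfwd x m hx hm).imp_right And.left
  · exact (hrev y m hy hm).imp_right And.left
  · exact (hfwd x m hx hm).2.2
  · exact (hrev y m hy hm).2.2
  · exact hbal x m hx hm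

theorem tsum_ite_ne_jumpRate {p : X → Prop} (move : X → ι → X) (w : X → ι → ℝ) (x : X)
    (hp : ∀ m, p (move x m)) (hw : ∀ m, move x m = x → w x m = 0) :
    ∑' y : {y // p y}, (if y.1 ≠ x then jumpRate move w x y.1 else 0) = ∑ m, w x m := by
  have hterm : ∀ y : {y // p y}, (if y.1 ≠ x then jumpRate move w x y.1 else 0)
      = ∑ m, if y = ⟨move x m, hp m⟩ then w x m else 0 := by
    rintro ⟨y, hy⟩
    simp only [jumpRate, Subtype.mk.injEq, @eq_comm _ y]
    split_ifs with hxy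
    · rfl
    · refine (Finset.sum_eq_zero fun m _ => ?_).symm
      grind
  rw [tsum_congr hterm, Summable.tsum_finsetSum fun m _ => (hasSum_ite_eq _ _).summable]
  simp only [tsum_ite_eq]

end JumpRate

theorem Phi_pos {J L : Type*} [Fintype J] [Fintype L] {A : L → J → ℝ} (hA : ∀ l j, 0 ≤ A l j)
    (hcol : ∀ j, ∃ l, 0 < A l j) (Q : J → ℕ) : 0 < Phi A Q := by
  choose lpos hlpos using hcol
  refine Summable.tsum_pos (summable_of_ne_finset_zero
    (s := Fintype.piFinset fun _ => Fintype.piFinset fun j => Finset.range (Q j + 1)) ?_) ?_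
    (fun l j => if l = lpos j then Q j else 0) ?_
  · intro m hm
    rw [if_neg]
    rintro ⟨-, hsum⟩
    refine hm (Fintype.mem_piFinset.2 fun l => Fintype.mem_piFinset.2 fun j => ?_)
    have := Finset.single_le_sum (fun l _ => Nat.zero_le (m l j)) (Finset.mem_univ l)
    rw [Finset.mem_range]
    linarith [hsum j]
  · intro m
    split_ifs
    · refine Finset.prod_nonneg fun l _ => mul_nonneg (by positivity) ?_
      exact Finset.prod_nonneg fun j _ => pow_nonneg (hA l j) _
    · rfl
  · have hsupp : ∀ l j, A l j = 0 → (if l = lpos j then Q j else 0) = 0 := by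
      intro l j hl
      rw [if_neg]
      rintro rfl
      exact (hlpos j).ne' hl
    rw [if_pos ⟨hsupp, fun j => by simp⟩]
    refine Finset.prod_pos fun l _ => mul_pos (by positivity) (Finset.prod_pos fun j _ => ?_)
    dsimp only
    split_ifs with h
    · exact pow_pos (h ▸ hlpos j) _
    · simp

theorem Finset.prod_update_eq_mul {ι M : Type*} [Fintype ι] [DecidableEq ι] [CommMonoid M]
    (f : ι → M) (i : ι) {b c : M} (h : b = f i * c) :
    ∏ x, Function.update f i b x = (∏ x, f x) * c := by
  rw [Finset.prod_update_of_mem (Finset.mem_univ i), h,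
    Finset.prod_eq_mul_prod_sdiff_singleton_of_mem (Finset.mem_univ i)]
  ac_rfl

section Balance
variable {J L R : Type*} [Fintype J] [Fintype L] [DecidableEq J] {A : L → J → ℝ} {a : R → ℝ}

theorem piSF_update_mul_sigmaSF (hΦ : ∀ Q, Phi A Q ≠ 0) (u : J → List R) (k : J) {r : R}
    {l : List R} (hl : l.Perm (r :: u k)) :
    piSF A a (Function.update u k l) *
        sigmaSF A (fun i => (Function.update u k l i).length) k = piSF A a u * a r := by
  have hQ : (fun i => (Function.update u k l i).length)
      = Function.update (fun i => (u i).length) k l.length :=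
    funext fun i => Function.apply_update (fun _ => List.length) u k l i
  have hQk : Function.update (Function.update (fun i => (u i).length) k l.length) k
      (l.length - 1) = fun i => (u i).length := by
    rw [Function.update_idem, hl.length_eq, List.length_cons, Nat.add_sub_cancel]
    exact Function.update_eq_self _ _
  have hW : ∏ i, ((Function.update u k l i).map a).prod = (∏ i, ((u i).map a).prod) * a r := by
    simp only [Function.apply_update (fun _ x => (x.map a).prod) u k l]
    refine Finset.prod_update_eq_mul _ _ ?_
    rw [(hl.map a).prod_eq, List.map_cons, List.prod_cons, mul_comm]
  rw [piSF, piSF, sigmaSF, hQ, Function.update_self, hQk, hW]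
  field_simp [hΦ]

end Balance

section Route
variable {J R : Type*} [DecidableEq J] {route : R → List J} {r : R} {j k : J}

theorem nextQ_eq_some_iff (hn : (route r).Nodup) :
    nextQ route r j = some k ↔ ∃ i, (route r)[i]? = some j ∧ (route r)[i + 1]? = some k := by
  unfold nextQ
  generalize route r = l at *
  refine ⟨fun h => ⟨l.idxOf j, by grind, h⟩, fun ⟨i, hj, hk⟩ => by grind⟩

theorem prevQ_eq_some_iff (hn : (route r).Nodup) (hk : k ∈ route r) :
    prevQ route r k = some j ↔ ∃ i, (route r)[i]? = some j ∧ (route r)[i + 1]? = some k := by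
  unfold prevQ
  generalize route r = l at *
  grind

theorem nextQ_eq_none_iff (hn : (route r).Nodup) (hj : j ∈ route r) :
    nextQ route r j = none ↔ (route r).getLast? = some j := by
  unfold nextQ
  generalize route r = l at *
  grind

theorem prevQ_eq_none_iff (hn : (route r).Nodup) (hj : j ∈ route r) :
    prevQ route r j = none ↔ (route r).head? = some j := by
  unfold prevQ
  generalize route r = l at *
  grind [List.head?_eq_getElem?, List.getElem?_idxOf]

theorem prevQ_eq_some_of_nextQ_eq_some (hn : (route r).Nodup)
    (h : nextQ route r j = some k) : prevQ route r k = some j := by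
  obtain ⟨i, hi, hi'⟩ := (nextQ_eq_some_iff hn).1 h
  exact (prevQ_eq_some_iff hn (List.mem_of_getElem? hi')).2 ⟨i, hi, hi'⟩

theorem nextQ_eq_some_of_prevQ_eq_some (hn : (route r).Nodup) (hj : j ∈ route r)
    (h : prevQ route r j = some k) : nextQ route r k = some j :=
  (nextQ_eq_some_iff hn).2 ((prevQ_eq_some_iff hn hj).1 h)

theorem mem_of_nextQ_eq_some (h : nextQ route r j = some k) : k ∈ route r :=
  List.mem_of_getElem? h

theorem mem_of_prevQ_eq_some (h : prevQ route r j = some k) : k ∈ route r := by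
  unfold prevQ at h
  split_ifs at h
  exact List.mem_of_getElem? h

theorem ne_of_nextQ_eq_some (hn : (route r).Nodup) (h : nextQ route r j = some k) : k ≠ j := by
  rintro rfl
  unfold nextQ at h
  grind

end Route

section Moves
variable {J R : Type*} [DecidableEq J]

theorem Admissible.update {route : R → List J} {s : J → List R} (hs : Admissible route s)
    {j : J} {l : List R} (hl : ∀ r ∈ l, j ∈ route r) :
    Admissible route (Function.update s j l) := by
  intro i r hr
  by_cases hij : i = j
  · subst hij
    exact hl r (by simpa using hr)
  · exact hs i r (by simpa [hij] using hr)

variable [DecidableEq R]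

-- Moves are labelled by `R ⊕ J`: `inl r` is an arrival on route `r`, `inr j` a service at `j`.
def fwdMove (route : R → List J) (s : J → List R) : R ⊕ J → J → List R :=
  Sum.elim (arrState route s) (serveState route s)

def revMove (route : R → List J) (s : J → List R) : R ⊕ J → J → List R :=
  Sum.elim (arrStateR route s) (serveStateR route s)

def Enabled (s : J → List R) : R ⊕ J → Prop :=
  Sum.elim (fun _ => True) fun j => s j ≠ []

-- The label of the reversed move undoing a forward move, and vice versa (junk on disabled moves).
def fwdUndo (route : R → List J) (s : J → List R) : R ⊕ J → R ⊕ J :=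
  Sum.elim (fun r => (route r).head?.elim (.inl r) .inr)
    fun j => (s j).head?.elim (.inr j) fun r => (nextQ route r j).elim (.inl r) .inr

def revUndo (route : R → List J) (s : J → List R) : R ⊕ J → R ⊕ J :=
  Sum.elim (fun r => (route r).getLast?.elim (.inl r) .inr)
    fun j => (s j).getLast?.elim (.inr j) fun r => (prevQ route r j).elim (.inl r) .inr

variable {route : R → List J} {s : J → List R}

theorem fwdMove_undo (hnodup : ∀ r, (route r).Nodup) (hne : ∀ r, route r ≠ [])
    (hs : Admissible route s) {m : R ⊕ J} (hm : Enabled s m) :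
    revMove route (fwdMove route s m) (fwdUndo route s m) = s ∧
      Enabled (fwdMove route s m) (fwdUndo route s m) ∧
      revUndo route (fwdMove route s m) (fwdUndo route s m) = m := by
  rcases m with r | j
  · obtain ⟨j, hj⟩ : ∃ j, (route r).head? = some j := ⟨_, List.head?_eq_some_head (hne r)⟩
    have hprev : prevQ route r j = none :=
      (prevQ_eq_none_iff (hnodup r) (List.mem_of_mem_head? hj)).2 hj
    simp [fwdMove, fwdUndo, revMove, revUndo, Enabled, arrState, serveStateR, hj, hprev]
  · obtain ⟨r, t, hsj⟩ := List.exists_cons_of_ne_nil hm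
    have hjr : j ∈ route r := hs j r (by simp [hsj])
    cases hnext : nextQ route r j with
    | none =>
      have hlast := (nextQ_eq_none_iff (hnodup r) hjr).1 hnext
      simp [fwdMove, fwdUndo, revMove, revUndo, Enabled, serveState, arrStateR, hsj, hnext, hlast]
    | some k =>
      have hkj := ne_of_nextQ_eq_some (hnodup r) hnext
      have hprev := prevQ_eq_some_of_nextQ_eq_some (hnodup r) hnext
      simp only [revMove, fwdMove, Sum.elim_inr, serveState, hsj, List.head?_cons, hnext,
        List.tail_cons, Function.update_of_ne hkj, fwdUndo, Option.elim_some, serveStateR,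
        Function.update_self, List.getLast?_append, List.getLast?_singleton, Option.some_or, hprev,
        ne_eq, List.cons_ne_self, not_false_eq_true, List.dropLast_append_of_ne_nil,
        List.dropLast_singleton, List.append_nil, Function.update_idem, Enabled,
        List.append_eq_nil_iff, and_false, revUndo, and_self, and_true]
      ext1 i
      by_cases hij : i = j <;> by_cases hik : i = k <;> simp_all

theorem revMove_undo (hnodup : ∀ r, (route r).Nodup) (hne : ∀ r, route r ≠ [])
    (hs : Admissible route s) {m : R ⊕ J} (hm : Enabled s m) :
    fwdMove route (revMove route s m) (revUndo route s m) = s ∧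
      Enabled (revMove route s m) (revUndo route s m) ∧
      fwdUndo route (revMove route s m) (revUndo route s m) = m := by
  rcases m with r | j
  · obtain ⟨j, hj⟩ : ∃ j, (route r).getLast? = some j := ⟨_, List.getLast?_eq_some_getLast (hne r)⟩
    have hnext : nextQ route r j = none :=
      (nextQ_eq_none_iff (hnodup r) (List.mem_of_getLast? hj)).2 hj
    simp [fwdMove, fwdUndo, revMove, revUndo, Enabled, arrStateR, serveState, hj, hnext]
  · obtain ⟨t, r, hsj⟩ : ∃ t r, s j = t ++ [r] := ⟨_, _, (List.dropLast_append_getLast hm).symm⟩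
    have hjr : j ∈ route r := hs j r (by simp [hsj])
    cases hprev : prevQ route r j with
    | none =>
      have hhead := (prevQ_eq_none_iff (hnodup r) hjr).1 hprev
      simp [fwdMove, fwdUndo, revMove, revUndo, Enabled, serveStateR, arrState, hsj, hprev, hhead]
    | some k =>
      have hnext := nextQ_eq_some_of_prevQ_eq_some (hnodup r) hjr hprev
      have hkj := ne_of_nextQ_eq_some (hnodup r) hnext
      simp [fwdMove, fwdUndo, revMove, revUndo, Enabled, serveState, serveStateR, hsj, hnext, hprev,
        Function.update_of_ne hkj]

theorem admissible_fwdMove (hs : Admissible route s) (m : R ⊕ J) :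
    Admissible route (fwdMove route s m) := by
  rcases m with r | j
  · cases hj : (route r).head? with
    | none => simpa [fwdMove, arrState, hj]
    | some j =>
      simp only [fwdMove, Sum.elim_inl, arrState, hj]
      refine hs.update fun p hp => ?_
      rcases List.mem_append.1 hp with hp | hp
      · exact hs j p hp
      · rw [List.mem_singleton.1 hp]
        exact List.mem_of_mem_head? hj
  · cases hsj : s j with
    | nil => simpa [fwdMove, serveState, hsj]
    | cons r t =>
      have ht : Admissible route (Function.update s j t) :=
        hs.update fun p hp => hs j p (by simp [hsj, hp])
      cases hnext : nextQ route r j with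
      | none => simpa [fwdMove, serveState, hsj, hnext]
      | some k =>
        simp only [fwdMove, Sum.elim_inr, serveState, hsj, hnext, List.head?_cons, List.tail_cons]
        refine ht.update fun p hp => ?_
        rcases List.mem_append.1 hp with hp | hp
        · exact ht k p hp
        · rw [List.mem_singleton.1 hp]
          exact mem_of_nextQ_eq_some hnext

theorem admissible_revMove (hs : Admissible route s) (m : R ⊕ J) :
    Admissible route (revMove route s m) := by
  rcases m with r | j
  · cases hj : (route r).getLast? with
    | none => simpa [revMove, arrStateR, hj]
    | some j =>
      simp only [revMove, Sum.elim_inl, arrStateR, hj]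
      refine hs.update fun p hp => ?_
      rcases List.mem_cons.1 hp with rfl | hp
      · exact List.mem_of_getLast? hj
      · exact hs j p hp
  · obtain hsj | ⟨t, r, hsj⟩ := List.eq_nil_or_concat (s j)
    · simpa [revMove, serveStateR, hsj]
    · have ht : Admissible route (Function.update s j t) :=
        hs.update fun p hp => hs j p (by simp [hsj, hp])
      cases hprev : prevQ route r j with
      | none => simpa [revMove, serveStateR, hsj, hprev]
      | some k =>
        simp only [revMove, Sum.elim_inr, serveStateR, hsj, hprev, List.concat_eq_append,
          List.getLast?_concat, List.dropLast_concat]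
        refine ht.update fun p hp => ?_
        rcases List.mem_cons.1 hp with rfl | hp
        · exact mem_of_prevQ_eq_some hprev
        · exact ht k p hp

theorem fwdMove_ne_self (hnodup : ∀ r, (route r).Nodup) (hne : ∀ r, route r ≠ [])
    {m : R ⊕ J} (hm : Enabled s m) : fwdMove route s m ≠ s := by
  intro h
  rcases m with r | j
  · obtain ⟨j, hj⟩ : ∃ j, (route r).head? = some j := ⟨_, List.head?_eq_some_head (hne r)⟩
    simpa [fwdMove, arrState, hj] using congrFun h j
  · obtain ⟨r, t, hsj⟩ := List.exists_cons_of_ne_nil hm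
    cases hnext : nextQ route r j with
    | none => simpa [fwdMove, serveState, hsj, hnext] using congrFun h j
    | some k =>
      simpa [fwdMove, serveState, hsj, hnext,
        Function.update_of_ne (ne_of_nextQ_eq_some (hnodup r) hnext).symm] using congrFun h j

theorem revMove_ne_self (hnodup : ∀ r, (route r).Nodup) (hne : ∀ r, route r ≠ [])
    (hs : Admissible route s) {m : R ⊕ J} (hm : Enabled s m) : revMove route s m ≠ s := by
  intro h
  rcases m with r | j
  · obtain ⟨j, hj⟩ : ∃ j, (route r).getLast? = some j :=
      ⟨_, List.getLast?_eq_some_getLast (hne r)⟩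
    simpa [revMove, arrStateR, hj] using congrFun h j
  · obtain ⟨t, r, hsj⟩ : ∃ t r, s j = t ++ [r] := ⟨_, _, (List.dropLast_append_getLast hm).symm⟩
    cases hprev : prevQ route r j with
    | none => simpa [revMove, serveStateR, hsj, hprev] using congrFun h j
    | some k =>
      have hkj := ne_of_nextQ_eq_some (hnodup r)
        (nextQ_eq_some_of_prevQ_eq_some (hnodup r) (hs j r (by simp [hsj])) hprev)
      simpa [revMove, serveStateR, hsj, hprev, Function.update_of_ne hkj] using congrFun h j

end Moves

section Rates
variable {J L R : Type*} [Fintype J] [Fintype L] [DecidableEq J]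

def moveRate (A : L → J → ℝ) (a : R → ℝ) (s : J → List R) : R ⊕ J → ℝ :=
  Sum.elim a fun j => if s j ≠ [] then sigmaSF A (fun i => (s i).length) j else 0

variable {A : L → J → ℝ} {a : R → ℝ} {s : J → List R}

theorem enabled_of_moveRate_ne_zero {m : R ⊕ J} (h : moveRate A a s m ≠ 0) : Enabled s m := by
  rcases m with r | j
  · trivial
  · by_contra hj
    simp_all [moveRate, Enabled]

theorem moveRate_ne_zero (ha : ∀ r, a r ≠ 0) (hΦ : ∀ Q, Phi A Q ≠ 0) {m : R ⊕ J}
    (hm : Enabled s m) : moveRate A a s m ≠ 0 := by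
  rcases m with r | j
  · exact ha r
  · simp_all [moveRate, Enabled, sigmaSF]

variable [DecidableEq R] {route : R → List J}

theorem piSF_mul_moveRate_fwdMove (hΦ : ∀ Q, Phi A Q ≠ 0) (hne : ∀ r, route r ≠ [])
    {m : R ⊕ J} (hm : Enabled s m) :
    piSF A a s * moveRate A a s m =
      piSF A a (fwdMove route s m) * moveRate A a (fwdMove route s m) (fwdUndo route s m) := by
  rcases m with r | j
  · obtain ⟨j, hj⟩ : ∃ j, (route r).head? = some j := ⟨_, List.head?_eq_some_head (hne r)⟩
    simpa [fwdMove, fwdUndo, moveRate, arrState, hj] using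
      (piSF_update_mul_sigmaSF hΦ s j (List.perm_append_singleton _ _)).symm
  · obtain ⟨r, t, hsj⟩ := List.exists_cons_of_ne_nil hm
    have hpop : piSF A a s * sigmaSF A (fun i => (s i).length) j
        = piSF A a (Function.update s j t) * a r := by
      simpa [← hsj] using
        piSF_update_mul_sigmaSF hΦ (Function.update s j t) j (l := r :: t) (by simp)
    cases hnext : nextQ route r j with
    | none => simpa [fwdMove, fwdUndo, moveRate, serveState, hsj, hnext] using hpop
    | some k =>
      simpa [fwdMove, fwdUndo, moveRate, serveState, hsj, hnext, hpop] using
        (piSF_update_mul_sigmaSF hΦ (Function.update s j t) k (List.perm_append_singleton _ _)).symm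

theorem qRate_eq_jumpRate [Fintype R] (s' : J → List R) :
    qRate A route a s s' = jumpRate (fwdMove route) (moveRate A a) s s' := by
  simp only [qRate, jumpRate, Fintype.sum_sum_type, fwdMove, moveRate, Sum.elim_inl,
    Sum.elim_inr]
  congr 1
  refine Finset.sum_congr rfl fun j _ => ?_
  split_ifs <;> simp_all

theorem qRateR_eq_jumpRate [Fintype R] (s' : J → List R) :
    qRateR A route a s s' = jumpRate (revMove route) (moveRate A a) s s' := by
  simp only [qRateR, jumpRate, Fintype.sum_sum_type, revMove, moveRate, Sum.elim_inl,
    Sum.elim_inr]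
  congr 1
  refine Finset.sum_congr rfl fun j _ => ?_
  split_ifs <;> simp_all

theorem piSF_mul_qRate [Fintype R] (hΦ : ∀ Q, Phi A Q ≠ 0) (ha : ∀ r, a r ≠ 0)
    (hnodup : ∀ r, (route r).Nodup) (hne : ∀ r, route r ≠ []) {s' : J → List R}
    (hs : Admissible route s) (hs' : Admissible route s') :
    piSF A a s * qRate A route a s s' = piSF A a s' * qRateR A route a s' s := by
  rw [qRate_eq_jumpRate, qRateR_eq_jumpRate]
  refine mul_jumpRate_eq_of_reversal (p := Admissible route) _ _ _ _ _
    (fwdUndo route) (revUndo route) (fun x m hx hm => ?_) (fun y m hy hm => ?_)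
    (fun x m _ hm => piSF_mul_moveRate_fwdMove hΦ hne (enabled_of_moveRate_ne_zero hm)) hs hs'
  · obtain ⟨h₁, h₂, h₃⟩ := fwdMove_undo hnodup hne hx (enabled_of_moveRate_ne_zero hm)
    exact ⟨h₁, moveRate_ne_zero ha hΦ h₂, h₃⟩
  · obtain ⟨h₁, h₂, h₃⟩ := revMove_undo hnodup hne hy (enabled_of_moveRate_ne_zero hm)
    exact ⟨h₁, moveRate_ne_zero ha hΦ h₂, h₃⟩

theorem tsum_qRate [Fintype R] (hnodup : ∀ r, (route r).Nodup) (hne : ∀ r, route r ≠ [])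
    (hs : Admissible route s) :
    ∑' s' : {s' : J → List R // Admissible route s'},
        (if s'.1 ≠ s then qRate A route a s s'.1 else 0)
      = (∑ r, a r) + ∑ j, if s j ≠ [] then sigmaSF A (fun i => (s i).length) j else 0 := by
  simp only [qRate_eq_jumpRate]
  rw [tsum_ite_ne_jumpRate _ _ _ (admissible_fwdMove hs) fun m hm => ?_]
  · exact Fintype.sum_sum_type _
  · by_contra h
    exact fwdMove_ne_self hnodup hne (enabled_of_moveRate_ne_zero h) hm

theorem tsum_qRateR [Fintype R] (hnodup : ∀ r, (route r).Nodup) (hne : ∀ r, route r ≠ [])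
    (hs : Admissible route s) :
    ∑' s' : {s' : J → List R // Admissible route s'},
        (if s'.1 ≠ s then qRateR A route a s s'.1 else 0)
      = (∑ r, a r) + ∑ j, if s j ≠ [] then sigmaSF A (fun i => (s i).length) j else 0 := by
  simp only [qRateR_eq_jumpRate]
  rw [tsum_ite_ne_jumpRate _ _ _ (admissible_revMove hs) fun m hm => ?_]
  · exact Fintype.sum_sum_type _
  · by_contra h
    exact revMove_ne_self hnodup hne hs (enabled_of_moveRate_ne_zero h) hm

end Rates

theorem storeForward_kelly_lemma_conditions_general
    {J L R : Type*} [Fintype J] [Fintype L] [Fintype R]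
    [DecidableEq J] [DecidableEq R]
    (A : L → J → ℝ) (hA : ∀ l j, 0 ≤ A l j)
    (hcol : ∀ j, ∃ l, 0 < A l j)
    (route : R → List J) (hnodup : ∀ r, (route r).Nodup) (hne : ∀ r, route r ≠ [])
    (a : R → ℝ) (ha : ∀ r, 0 < a r) :
    (∀ s s' : {s : J → List R // Admissible route s}, s.1 ≠ s'.1 →
      piSF A a s.1 * qRate A route a s.1 s'.1
        = piSF A a s'.1 * qRateR A route a s'.1 s.1) ∧
    (∀ s : {s : J → List R // Admissible route s},
      (∑' s' : {s' : J → List R // Admissible route s'},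
          if s'.1 ≠ s.1 then qRate A route a s.1 s'.1 else 0)
        = (∑ r : R, a r) +
            ∑ j : J, (if s.1 j ≠ [] then sigmaSF A (fun i => (s.1 i).length) j else 0) ∧
      (∑' s' : {s' : J → List R // Admissible route s'},
          if s'.1 ≠ s.1 then qRateR A route a s.1 s'.1 else 0)
        = (∑ r : R, a r) +
            ∑ j : J, (if s.1 j ≠ [] then sigmaSF A (fun i => (s.1 i).length) j else 0)) := by
  have hΦ : ∀ Q, Phi A Q ≠ 0 := fun Q => (Phi_pos hA hcol Q).ne'
  exact ⟨fun s s' _ => piSF_mul_qRate hΦ (fun r => (ha r).ne') hnodup hne s.2 s'.2,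
    fun s => ⟨tsum_qRate hnodup hne s.2, tsum_qRateR hnodup hne s.2⟩⟩

/-- Kelly's lemma conditions for the Store-Forward network:
(i) for all states `s ≠ s'`, `π(s) q(s, s') = π(s') q^R(s', s)`;
(ii) for every state `s = (Q, γ)`, the total outgoing rates of the forward and reversed
chains agree: `∑_{s' ≠ s} q(s, s') = ∑_{s' ≠ s} q^R(s, s') = ∑_r a_r + ∑_{j : Q_j ≥ 1} σ^SF_j(Q)`. -/
theorem storeForward_kelly_lemma_conditions
    {J L R : Type*} [Fintype J] [Nonempty J] [Fintype L] [Nonempty L] [Fintype R]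
    [DecidableEq J] [DecidableEq R]
    (A : L → J → ℝ) (hA : ∀ l j, 0 ≤ A l j)
    (hcol : ∀ j, ∃ l, 0 < A l j)
    (route : R → List J) (hnodup : ∀ r, (route r).Nodup) (hne : ∀ r, route r ≠ [])
    (a : R → ℝ) (ha : ∀ r, 0 < a r)
    (aJ : J → ℝ) (haJ : ∀ j, aJ j = ∑ r : R, if j ∈ route r then a r else 0)
    (aL : L → ℝ) (haL : ∀ l, aL l = ∑ j, A l j * aJ j)
    (hsub : ∀ l, aL l < 1) :
    (∀ s s' : {s : J → List R // Admissible route s}, s.1 ≠ s'.1 →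
      piSF A a s.1 * qRate A route a s.1 s'.1
        = piSF A a s'.1 * qRateR A route a s'.1 s.1) ∧
    (∀ s : {s : J → List R // Admissible route s},
      (∑' s' : {s' : J → List R // Admissible route s'},
          if s'.1 ≠ s.1 then qRate A route a s.1 s'.1 else 0)
        = (∑ r : R, a r) +
            ∑ j : J, (if s.1 j ≠ [] then sigmaSF A (fun i => (s.1 i).length) j else 0) ∧
      (∑' s' : {s' : J → List R // Admissible route s'},
          if s'.1 ≠ s.1 then qRateR A route a s.1 s'.1 else 0)
        = (∑ r : R, a r) +
            ∑ j : J, (if s.1 j ≠ [] then sigmaSF A (fun i => (s.1 i).length) j else 0)) :=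
  storeForward_kelly_lemma_conditions_general A hA hcol route hnodup hne a ha

end
end

section
/- For every l ∈ L and j ∈ J, the expectation of the j-th coordinate under p_l is A_{lj} a_j / (1 − a_l): the series ∑_{k} k_j · p_l(k) converges and equals A_{lj} a_j / (1 − a_l). -/
open scoped BigOperators Classical

/-- The probability mass function `p_l` of the context (extended by zero off its support):
`p_l(k) = (1 - a_l) * (|k|)! / ∏_j (k j)! * ∏_j (A l j * a_j)^(k j)` where `|k| = ∑ j, k j`. -/
noncomputable def pl {J : Type*} [Fintype J] (Al : J → ℝ) (aJ : J → ℝ) (al : ℝ)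
    (k : J → ℕ) : ℝ :=
  (1 - al) * (((∑ j, k j).factorial : ℝ) / ∏ j, ((k j).factorial : ℝ)) *
    ∏ j, (Al j * aJ j) ^ k j

/-!
Write `x i = A l i * a_i`, so that `p_l k = (1 - s) * multinomial k * x ^ k` with
`s = ∑ i, x i = a_l`. By the multinomial theorem the terms with `|k| = n` sum to `s ^ n`.
The shift `k ↦ k + e_j` turns `k_j * multinomial k * x ^ k` into
`x_j * (|k| + 1) * multinomial k * x ^ k`, so summing by total degree the `j`-th moment is
`(1 - s) * x_j * ∑ n, (n + 1) * s ^ n = x_j / (1 - s)`.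
-/

open Finset Function
open scoped Nat

section

variable {ι : Type*} [Fintype ι]

theorem hasSum_of_hasSum_sum_piAntidiag {f : (ι → ℕ) → ℝ} (hf : 0 ≤ f) {S : ℝ}
    (h : HasSum (fun n ↦ ∑ k ∈ piAntidiag univ n, f k) S) : HasSum f S := by
  have hpart : ∀ k : ι → ℕ, ∃! n, k ∈ (piAntidiag (univ : Finset ι) n : Set (ι → ℕ)) :=
    fun k ↦ ⟨∑ i, k i, by simp, fun n hn ↦ by simp_all⟩
  have hsum : Summable f := (summable_partition hf hpart).2
    ⟨fun n ↦ (piAntidiag univ n).summable f,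
      by simpa only [Finset.tsum_subtype'] using h.summable⟩
  have hfib := ((Set.sigmaEquiv _ hpart).hasSum_iff.2 hsum.hasSum).sigma
    fun n ↦ (piAntidiag univ n).hasSum f
  exact h.unique hfib ▸ hsum.hasSum

theorem Nat.cast_multinomial_univ {K : Type*} [Field K] [CharZero K] (k : ι → ℕ) :
    (Nat.multinomial univ k : K) = (∑ i, k i)! / ∏ i, ((k i)! : K) := by
  rw [eq_div_iff (prod_ne_zero_iff.2 fun i _ ↦ Nat.cast_ne_zero.2 (k i).factorial_ne_zero),
    ← Nat.multinomial_spec univ k]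
  push_cast
  ring

theorem prod_update_eq_mul_prod_compl {M : Type*} [CommMonoid M] (g : ι → ℕ → M)
    (k : ι → ℕ) (j : ι) (v : ℕ) :
    ∏ i, g i (update k j v i) = g j v * ∏ i ∈ {j}ᶜ, g i (k i) := by
  rw [Fintype.prod_eq_mul_prod_compl j, update_self]
  congr 1
  exact prod_congr rfl fun i hi ↦ by rw [update_of_ne (by simpa using hi)]

theorem succ_mul_multinomial_update_succ (k : ι → ℕ) (j : ι) :
    (k j + 1) * Nat.multinomial univ (update k j (k j + 1))
      = (∑ i, k i + 1) * Nat.multinomial univ k := by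
  have hsum : ∑ i, update k j (k j + 1) i = ∑ i, k i + 1 := by
    rw [sum_update_of_mem (mem_univ j), Fintype.sum_eq_add_sum_compl j, ← compl_eq_univ_sdiff]
    ring
  have hprod : ∏ i, (update k j (k j + 1) i)! = (k j + 1) * ∏ i, (k i)! := by
    rw [prod_update_eq_mul_prod_compl (fun _ n ↦ n !), Fintype.prod_eq_mul_prod_compl j,
      Nat.factorial_succ, mul_assoc]
  have hspec := Nat.multinomial_spec univ (update k j (k j + 1))
  rw [hsum, hprod, Nat.factorial_succ, ← Nat.multinomial_spec univ k] at hspec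
  have hpos : 0 < ∏ i, (k i)! := Nat.prod_factorial_pos _ _
  apply Nat.eq_of_mul_eq_mul_left hpos
  linarith

theorem prod_pow_update_succ {M : Type*} [CommMonoid M] (x : ι → M) (k : ι → ℕ) (j : ι) :
    ∏ i, x i ^ update k j (k j + 1) i = x j * ∏ i, x i ^ k i := by
  rw [prod_update_eq_mul_prod_compl (fun i n ↦ x i ^ n), Fintype.prod_eq_mul_prod_compl j,
    pow_succ]
  ac_rfl

noncomputable def multinomialTerm (x : ι → ℝ) (k : ι → ℕ) : ℝ :=
  Nat.multinomial univ k * ∏ i, x i ^ k i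

theorem multinomialTerm_nonneg {x : ι → ℝ} (hx : 0 ≤ x) (k : ι → ℕ) :
    0 ≤ multinomialTerm x k :=
  mul_nonneg (Nat.cast_nonneg _) (prod_nonneg fun i _ ↦ pow_nonneg (hx i) _)

theorem sum_piAntidiag_multinomialTerm (x : ι → ℝ) (n : ℕ) :
    ∑ k ∈ piAntidiag univ n, multinomialTerm x k = (∑ i, x i) ^ n :=
  (sum_pow_eq_sum_piAntidiag univ x n).symm

theorem succ_mul_multinomialTerm_update_succ (x : ι → ℝ) (k : ι → ℕ) (j : ι) :
    (k j + 1) * multinomialTerm x (update k j (k j + 1))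
      = x j * ((∑ i, k i + 1) * multinomialTerm x k) := by
  have h := congrArg (Nat.cast (R := ℝ)) (succ_mul_multinomial_update_succ k j)
  push_cast at h
  rw [multinomialTerm, multinomialTerm, prod_pow_update_succ, ← mul_assoc, h]
  push_cast
  ring

theorem hasSum_succ_sum_mul_multinomialTerm {x : ι → ℝ} (hx : 0 ≤ x) (hs : ∑ i, x i < 1) :
    HasSum (fun k ↦ ((∑ i, k i : ℕ) + 1 : ℝ) * multinomialTerm x k)
      (1 / (1 - ∑ i, x i) ^ 2) := by
  have hs₀ : 0 ≤ ∑ i, x i := sum_nonneg fun i _ ↦ hx i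
  refine hasSum_of_hasSum_sum_piAntidiag
    (fun k ↦ mul_nonneg (by positivity) (multinomialTerm_nonneg hx k)) ?_
  have hfiber : ∀ n,
      ∑ k ∈ piAntidiag univ n, ((∑ i, k i : ℕ) + 1 : ℝ) * multinomialTerm x k
        = (n + 1 : ℕ).choose 1 * (∑ i, x i) ^ n := by
    intro n
    rw [Nat.choose_one_right, ← sum_piAntidiag_multinomialTerm, mul_sum]
    refine sum_congr rfl fun k hk ↦ ?_
    rw [(mem_piAntidiag.1 hk).1]
    push_cast
    ring
  simpa only [hfiber] using hasSum_choose_mul_geometric_of_norm_lt_one 1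
    (by rwa [Real.norm_of_nonneg hs₀])

theorem hasSum_coord_mul_multinomialTerm {x : ι → ℝ} (hx : 0 ≤ x) (hs : ∑ i, x i < 1)
    (j : ι) :
    HasSum (fun k ↦ (k j : ℝ) * multinomialTerm x k) (x j / (1 - ∑ i, x i) ^ 2) := by
  have hinj : Injective fun k : ι → ℕ ↦ update k j (k j + 1) := by
    intro k m hkm
    have hj := congrFun hkm j
    simp only [update_self, add_left_inj] at hj
    have hupd := congrArg (update · j (k j)) hkm
    simp only [update_idem, update_eq_self] at hupd
    rwa [hj, update_eq_self] at hupd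
  have hrange : ∀ k ∉ Set.range fun k : ι → ℕ ↦ update k j (k j + 1),
      (k j : ℝ) * multinomialTerm x k = 0 := by
    intro k hk
    suffices k j = 0 by simp [this]
    by_contra hkj
    exact hk ⟨update k j (k j - 1), by simp [Nat.sub_add_cancel (Nat.pos_of_ne_zero hkj)]⟩
  rw [← hinj.hasSum_iff hrange, ← mul_one_div]
  refine ((hasSum_succ_sum_mul_multinomialTerm hx hs).mul_left (x j)).congr_fun fun k ↦ ?_
  simpa using succ_mul_multinomialTerm_update_succ x k j

end

theorem pl_eq_mul_multinomialTerm {J : Type*} [Fintype J] (Al aJ : J → ℝ) (al : ℝ)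
    (k : J → ℕ) : pl Al aJ al k = (1 - al) * multinomialTerm (fun i ↦ Al i * aJ i) k := by
  rw [pl, multinomialTerm, Nat.cast_multinomial_univ, mul_assoc]

theorem pl_coordinate_expectation_general
    {J L R : Type*} [Fintype J] [Fintype R]
    (A : L → J → ℝ) (hA : ∀ l j, 0 ≤ A l j)
    (route : R → List J)
    (a : R → ℝ) (ha : ∀ r, 0 < a r)
    (aJ : J → ℝ) (haJ : ∀ j, aJ j = ∑ r : R, if j ∈ route r then a r else 0)
    (aL : L → ℝ) (haL : ∀ l, aL l = ∑ j, A l j * aJ j)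
    (hsub : ∀ l, aL l < 1)
    (l : L) (j : J) :
    HasSum (fun k : J → ℕ => (k j : ℝ) * pl (A l) aJ (aL l) k)
      (A l j * aJ j / (1 - aL l)) := by
  have haJ_nonneg : ∀ i, 0 ≤ aJ i := fun i ↦
    (haJ i).symm ▸ sum_nonneg fun r _ ↦ by split_ifs <;> [exact (ha r).le; rfl]
  have hx : 0 ≤ fun i ↦ A l i * aJ i := fun i ↦ mul_nonneg (hA l i) (haJ_nonneg i)
  have hs : ∑ i, A l i * aJ i = aL l := (haL l).symm
  have hne : 1 - aL l ≠ 0 := (sub_pos.2 (hsub l)).ne'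
  have key := (hasSum_coord_mul_multinomialTerm hx (hs ▸ hsub l) j).mul_left (1 - aL l)
  have hval : (1 - aL l) * (A l j * aJ j / (1 - aL l) ^ 2) = A l j * aJ j / (1 - aL l) := by
    field_simp
  rw [hs, hval] at key
  refine key.congr_fun fun k ↦ ?_
  rw [pl_eq_mul_multinomialTerm]
  ring

/-- for every `l ∈ L` and `j ∈ J`, the expectation of the `j`-th coordinate
under `p_l` is `A l j * a_j / (1 - a_l)`: the series `∑_k (k j) * p_l(k)` converges and
equals `A l j * a_j / (1 - a_l)`. -/
theorem pl_coordinate_expectation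
    {J L R : Type*} [Fintype J] [Nonempty J] [Fintype L] [Nonempty L] [Fintype R]
    (A : L → J → ℝ) (hA : ∀ l j, 0 ≤ A l j)
    (route : R → List J) (hnodup : ∀ r, (route r).Nodup)
    (a : R → ℝ) (ha : ∀ r, 0 < a r)
    (aJ : J → ℝ) (haJ : ∀ j, aJ j = ∑ r : R, if j ∈ route r then a r else 0)
    (aL : L → ℝ) (haL : ∀ l, aL l = ∑ j, A l j * aJ j)
    (hsub : ∀ l, aL l < 1)
    (l : L) (j : J) :
    HasSum (fun k : J → ℕ => (k j : ℝ) * pl (A l) aJ (aL l) k)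
      (A l j * aJ j / (1 - aL l)) :=
  pl_coordinate_expectation_general A hA route a ha aJ haJ aL haL hsub l j
end

section
/- The expected stationary queue length at queue j equals ∑_{l : A_{lj} > 0} A_{lj} a_j / (1 − a_l): under the product measure μ, the expectation of the j-th coordinate of T, namely ∑_m T(m)_j · μ(m), converges and equals ∑_{l ∈ L} A_{lj} a_j / (1 − a_l). -/
open scoped BigOperators Classical

/-!
Each `p_l` is a multinomial-geometric law: grouping the configurations `k` by their total size
`n = |k|` and applying the multinomial theorem gives `∑_{|k| = n} p_l(k) = (1 - a_l) a_l ^ n`, so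
`p_l` has total mass one. Shifting `k ↦ k + e_j` turns `k_j · multinomial(k)` into
`(|k| + 1) · multinomial(k)`, so the mean of `k_j` under `p_l` is
`(1 - a_l) · A_lj a_j · ∑ (n + 1) a_l ^ n = A_lj a_j / (1 - a_l)`. Under the product measure the
factors `l' ≠ l` integrate to one, so the mean of `T(m)_j = ∑_l m_lj` is the sum of these means.
All series are handled in `ℝ≥0∞`, where rearrangements need no summability side conditions.
-/

open Finset ENNReal

namespace ENNReal

theorem tsum_eq_tsum_sum_of_preimage_eq {α β : Type*} (f : α → ℝ≥0∞) (g : α → β)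
    (t : β → Finset α) (ht : ∀ b, g ⁻¹' {b} = t b) :
    ∑' a, f a = ∑' b, ∑ a ∈ t b, f a := by
  rw [← ENNReal.tsum_fiberwise f g]
  congr! 2 with b
  rw [ht b]
  exact Finset.tsum_subtype (t b) f

theorem tsum_succ_mul_geometric (r : ℝ≥0∞) : ∑' n : ℕ, (n + 1) * r ^ n = (1 - r)⁻¹ ^ 2 :=
  calc ∑' n : ℕ, ((n : ℝ≥0∞) + 1) * r ^ n
      = ∑' n : ℕ, ∑ p ∈ antidiagonal n, r ^ p.1 * r ^ p.2 := by
        congr! 1 with n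
        simp [← pow_add, sum_congr rfl fun p hp => congrArg (r ^ ·) (mem_antidiagonal.1 hp)]
    _ = ∑' p : ℕ × ℕ, r ^ p.1 * r ^ p.2 :=
        (tsum_eq_tsum_sum_of_preimage_eq _ (fun p => p.1 + p.2) antidiagonal
          fun n => by ext; simp).symm
    _ = (1 - r)⁻¹ ^ 2 := by
        simp [ENNReal.tsum_prod', ENNReal.tsum_mul_left, ENNReal.tsum_mul_right,
          ENNReal.tsum_geometric, sq]

theorem tsum_pi_prod {ι β : Type*} [Fintype ι] (g : ι → β → ℝ≥0∞) :
    ∑' m : ι → β, ∏ i, g i (m i) = ∏ i, ∑' b, g i b := by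
  revert g
  refine Fintype.induction_empty_option
    (P := fun ι _ => ∀ g : ι → β → ℝ≥0∞, ∑' m : ι → β, ∏ i, g i (m i) = ∏ i, ∑' b, g i b)
    ?_ ?_ ?_ ι
  · intro ι ι' _ e ih g
    let := Fintype.ofEquiv ι' e.symm
    rw [← (e.arrowCongr (Equiv.refl β)).tsum_eq, ← Fintype.prod_equiv e _ _ fun _ => rfl]
    simpa [← Fintype.prod_equiv e _ _ fun _ => rfl] using ih (fun i => g (e i))
  · simp
  · intro ι _ ih g
    rw [← (Equiv.piOptionEquivProd (β := fun _ => β)).symm.tsum_eq, ENNReal.tsum_prod',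
      Fintype.prod_option]
    simp [Fintype.prod_option, ENNReal.tsum_mul_left, ENNReal.tsum_mul_right, ih]

theorem tsum_mul_pi_prod_of_tsum_eq_one {ι β : Type*} [Fintype ι]
    {P : ι → β → ℝ≥0∞} (hP : ∀ i, ∑' b, P i b = 1) (i₀ : ι) (φ : β → ℝ≥0∞) :
    ∑' m : ι → β, φ (m i₀) * ∏ i, P i (m i) = ∑' b, φ b * P i₀ b := by
  set g := Function.update P i₀ fun b => φ b * P i₀ b
  have hg_ne : ∀ i ∈ ({i₀}ᶜ : Finset ι), g i = P i := fun i hi =>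
    Function.update_of_ne (by simpa using hi) _ _
  have hg (m : ι → β) : ∏ i, g i (m i) = φ (m i₀) * ∏ i, P i (m i) := by
    rw [Fintype.prod_eq_mul_prod_compl i₀, Fintype.prod_eq_mul_prod_compl i₀, ← mul_assoc,
      prod_congr rfl fun i hi => congrFun (hg_ne i hi) (m i)]
    simp [g]
  simp_rw [← hg, tsum_pi_prod, Fintype.prod_eq_mul_prod_compl i₀,
    prod_congr rfl fun i hi => (hg_ne i hi).symm ▸ hP i, prod_const_one, mul_one]
  simp [g]

end ENNReal

theorem hasSum_of_tsum_ofReal_eq_ofReal {α : Type*} {f : α → ℝ} (hf : ∀ a, 0 ≤ f a) {s : ℝ}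
    (hs : 0 ≤ s) (h : ∑' a, ENNReal.ofReal (f a) = ENNReal.ofReal s) : HasSum f s := by
  convert ENNReal.hasSum_toReal (h ▸ ofReal_ne_top) using 1
  · exact funext fun a => (toReal_ofReal (hf a)).symm
  · rw [← ENNReal.tsum_toReal_eq fun _ => ofReal_ne_top, h, toReal_ofReal hs]

section Multinomial

variable {J : Type*} [Fintype J]

theorem prod_factorial_add_single (k : J → ℕ) (j : J) :
    ∏ i, ((k + Pi.single j 1 : J → ℕ) i).factorial = (k j + 1) * ∏ i, (k i).factorial := by
  rw [Fintype.prod_eq_mul_prod_compl j, Fintype.prod_eq_mul_prod_compl j, ← mul_assoc]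
  congr 1
  · simp [Nat.factorial_succ]
  · exact prod_congr rfl fun i hi => by simp [Pi.single_eq_of_ne (by simpa using hi : i ≠ j)]

theorem prod_pow_add_single {M : Type*} [CommMonoid M] (y : J → M) (k : J → ℕ) (j : J) :
    ∏ i, y i ^ (k + Pi.single j 1 : J → ℕ) i = y j * ∏ i, y i ^ k i := by
  rw [Fintype.prod_eq_mul_prod_compl j, Fintype.prod_eq_mul_prod_compl j, ← mul_assoc]
  congr 1
  · simp [pow_succ, mul_comm]
  · exact prod_congr rfl fun i hi => by simp [Pi.single_eq_of_ne (by simpa using hi : i ≠ j)]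

theorem Nat.succ_mul_multinomial_add_single (k : J → ℕ) (j : J) :
    (k j + 1) * Nat.multinomial univ (k + Pi.single j 1) =
      (∑ i, k i + 1) * Nat.multinomial univ k := by
  refine Nat.eq_of_mul_eq_mul_left (prod_pos fun i _ => (k i).factorial_pos :
    0 < ∏ i, (k i).factorial) ?_
  rw [mul_left_comm, ← mul_assoc, ← prod_factorial_add_single, Nat.multinomial_spec,
    mul_left_comm, Nat.multinomial_spec]
  simp [sum_add_distrib, Nat.factorial_succ]

theorem Nat.cast_multinomial_univ_s8 (k : J → ℕ) :
    (Nat.multinomial univ k : ℝ) = ((∑ j, k j).factorial : ℝ) / ∏ j, ((k j).factorial : ℝ) := by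
  rw [Nat.multinomial, Nat.cast_div (Nat.prod_factorial_dvd_factorial_sum _ _), Nat.cast_prod]
  exact_mod_cast (prod_pos fun j _ => (k j).factorial_pos).ne'

noncomputable def multinomialWeight (y : J → ℝ≥0∞) (k : J → ℕ) : ℝ≥0∞ :=
  Nat.multinomial univ k * ∏ j, y j ^ k j

theorem tsum_mul_multinomialWeight (c : ℕ → ℝ≥0∞) (y : J → ℝ≥0∞) :
    ∑' k, c (∑ j, k j) * multinomialWeight y k = ∑' n, c n * (∑ j, y j) ^ n := by
  rw [ENNReal.tsum_eq_tsum_sum_of_preimage_eq _ (fun k => ∑ j, k j) (piAntidiag univ)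
    fun n => by ext; simp [mem_piAntidiag]]
  refine tsum_congr fun n => ?_
  rw [sum_pow_eq_sum_piAntidiag, mul_sum]
  refine sum_congr rfl fun k hk => ?_
  rw [(mem_piAntidiag.1 hk).1, multinomialWeight]

theorem tsum_multinomialWeight (y : J → ℝ≥0∞) :
    ∑' k, multinomialWeight y k = (1 - ∑ j, y j)⁻¹ := by
  simpa using tsum_mul_multinomialWeight (fun _ => 1) y

theorem coe_add_single_mul_multinomialWeight (y : J → ℝ≥0∞) (k : J → ℕ) (j : J) :
    ((k + Pi.single j 1 : J → ℕ) j : ℝ≥0∞) * multinomialWeight y (k + Pi.single j 1) =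
      (∑ i, k i + 1) * y j * multinomialWeight y k := by
  have hj : ((k + Pi.single j 1 : J → ℕ) j : ℝ≥0∞) = k j + 1 := by simp
  rw [hj, multinomialWeight, multinomialWeight, prod_pow_add_single]
  calc _ = ((k j + 1) * Nat.multinomial univ (k + Pi.single j 1) : ℕ) * y j *
        ∏ i, y i ^ k i := by push_cast; ring
    _ = ((∑ i, k i + 1) * Nat.multinomial univ k : ℕ) * y j * ∏ i, y i ^ k i := by
        rw [Nat.succ_mul_multinomial_add_single]
    _ = _ := by push_cast; ring

theorem tsum_coe_mul_multinomialWeight (y : J → ℝ≥0∞) (j : J) :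
    ∑' k, (k j : ℝ≥0∞) * multinomialWeight y k = y j * (1 - ∑ i, y i)⁻¹ ^ 2 := by
  have hsupp : Function.support (fun k : J → ℕ => (k j : ℝ≥0∞) * multinomialWeight y k) ⊆
      Set.range (· + (Pi.single j 1 : J → ℕ)) := by
    intro k hk
    have hkj : k j ≠ 0 := by rintro h; simp [h] at hk
    refine ⟨k - Pi.single j 1, tsub_add_cancel_of_le fun i => ?_⟩
    rcases eq_or_ne i j with rfl | hi
    · simpa [Nat.one_le_iff_ne_zero] using hkj
    · simp [Pi.single_eq_of_ne hi]
  rw [← (add_left_injective (Pi.single j 1 : J → ℕ)).tsum_eq hsupp]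
  simp_rw [coe_add_single_mul_multinomialWeight]
  rw [tsum_mul_multinomialWeight (fun n => (n + 1) * y j) y]
  simp_rw [mul_right_comm _ (y j), ENNReal.tsum_mul_right, ENNReal.tsum_succ_mul_geometric]
  exact mul_comm _ _

end Multinomial

section StationaryLaw

variable {J : Type*} [Fintype J] {Al aJ : J → ℝ} {al : ℝ}

theorem pl_nonneg (hx : ∀ j, 0 ≤ Al j * aJ j) (hal : al ≤ 1) (k : J → ℕ) :
    0 ≤ pl Al aJ al k := by
  have := sub_nonneg.2 hal
  have := prod_nonneg fun j (_ : j ∈ univ) => pow_nonneg (hx j) (k j)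
  unfold pl
  positivity

theorem ofReal_pl (hx : ∀ j, 0 ≤ Al j * aJ j) (k : J → ℕ) :
    ENNReal.ofReal (pl Al aJ al k) =
      ENNReal.ofReal (1 - al) * multinomialWeight (fun j => ENNReal.ofReal (Al j * aJ j)) k := by
  rw [pl, ← Nat.cast_multinomial_univ_s8, mul_assoc,
    ENNReal.ofReal_mul' (mul_nonneg (by positivity) (prod_nonneg fun j _ => pow_nonneg (hx j) _)),
    multinomialWeight,
    ENNReal.ofReal_mul (by positivity), ofReal_natCast,
    ENNReal.ofReal_prod_of_nonneg fun j _ => pow_nonneg (hx j) _]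
  simp_rw [ENNReal.ofReal_pow (hx _)]

theorem one_sub_sum_ofReal (hx : ∀ j, 0 ≤ Al j * aJ j) (hal : al = ∑ j, Al j * aJ j) :
    1 - ∑ j, ENNReal.ofReal (Al j * aJ j) = ENNReal.ofReal (1 - al) := by
  rw [← ENNReal.ofReal_sum_of_nonneg fun j _ => hx j, ← hal, ENNReal.ofReal_sub _
    (hal ▸ sum_nonneg fun j _ => hx j), ENNReal.ofReal_one]

variable (hx : ∀ j, 0 ≤ Al j * aJ j) (hal : al = ∑ j, Al j * aJ j) (h1 : al < 1)
include hx hal h1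

theorem tsum_ofReal_pl : ∑' k, ENNReal.ofReal (pl Al aJ al k) = 1 := by
  simp_rw [ofReal_pl hx, ENNReal.tsum_mul_left, tsum_multinomialWeight, one_sub_sum_ofReal hx hal]
  exact ENNReal.mul_inv_cancel (ENNReal.ofReal_pos.2 (sub_pos.2 h1)).ne' ofReal_ne_top

theorem tsum_coe_mul_ofReal_pl (j : J) :
    ∑' k, (k j : ℝ≥0∞) * ENNReal.ofReal (pl Al aJ al k) =
      ENNReal.ofReal (Al j * aJ j / (1 - al)) := by
  have hpos : 0 < 1 - al := sub_pos.2 h1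
  simp_rw [ofReal_pl hx, mul_left_comm _ (ENNReal.ofReal (1 - al)), ENNReal.tsum_mul_left,
    tsum_coe_mul_multinomialWeight, one_sub_sum_ofReal hx hal, ENNReal.ofReal_div_of_pos hpos]
  rw [mul_left_comm, sq, ← mul_assoc (ENNReal.ofReal (1 - al)),
    ENNReal.mul_inv_cancel (ENNReal.ofReal_pos.2 hpos).ne' ofReal_ne_top, one_mul, div_eq_mul_inv]

end StationaryLaw

theorem expected_stationary_queue_length_general
    {J L R : Type*} [Fintype J] [Fintype L] [Fintype R]
    (A : L → J → ℝ) (hA : ∀ l j, 0 ≤ A l j)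
    (route : R → List J)
    (a : R → ℝ) (ha : ∀ r, 0 < a r)
    (aJ : J → ℝ) (haJ : ∀ j, aJ j = ∑ r : R, if j ∈ route r then a r else 0)
    (aL : L → ℝ) (haL : ∀ l, aL l = ∑ j, A l j * aJ j)
    (hsub : ∀ l, aL l < 1)
    (j : J) :
    HasSum
      (fun m : L → J → ℕ => ((∑ l, m l j : ℕ) : ℝ) * ∏ l, pl (A l) aJ (aL l) (m l))
      (∑ l, A l j * aJ j / (1 - aL l)) := by
  have hx (l : L) (i : J) : 0 ≤ A l i * aJ i := mul_nonneg (hA l i) <|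
    (haJ i).symm ▸ sum_nonneg fun r _ => by split_ifs <;> [exact (ha r).le; rfl]
  have hp (l : L) := pl_nonneg (hx l) (hsub l).le
  have hmean (l : L) : 0 ≤ A l j * aJ j / (1 - aL l) :=
    div_nonneg (hx l j) (sub_nonneg.2 (hsub l).le)
  refine hasSum_of_tsum_ofReal_eq_ofReal
    (fun m => mul_nonneg (Nat.cast_nonneg _) (prod_nonneg fun l _ => hp l _))
    (sum_nonneg fun l _ => hmean l) ?_
  calc ∑' m : L → J → ℕ,
        ENNReal.ofReal (((∑ l, m l j : ℕ) : ℝ) * ∏ l, pl (A l) aJ (aL l) (m l))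
      = ∑' m : L → J → ℕ,
          ∑ l₀, (m l₀ j : ℝ≥0∞) * ∏ l, ENNReal.ofReal (pl (A l) aJ (aL l) (m l)) := by
        refine tsum_congr fun m => ?_
        rw [ENNReal.ofReal_mul (Nat.cast_nonneg _), ofReal_natCast,
          ENNReal.ofReal_prod_of_nonneg fun l _ => hp l _, Nat.cast_sum, sum_mul]
    _ = ∑ l₀, ∑' k : J → ℕ, (k j : ℝ≥0∞) * ENNReal.ofReal (pl (A l₀) aJ (aL l₀) k) := by
        rw [Summable.tsum_finsetSum fun _ _ => ENNReal.summable]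
        exact sum_congr rfl fun l₀ _ => ENNReal.tsum_mul_pi_prod_of_tsum_eq_one
          (fun l => tsum_ofReal_pl (hx l) (haL l) (hsub l)) l₀ fun k => (k j : ℝ≥0∞)
    _ = ENNReal.ofReal (∑ l, A l j * aJ j / (1 - aL l)) := by
        rw [ENNReal.ofReal_sum_of_nonneg fun l _ => hmean l]
        exact sum_congr rfl fun l _ => tsum_coe_mul_ofReal_pl (hx l) (haL l) (hsub l) j

/-- the expected stationary queue length at queue `j` equals
`∑_{l} A l j * a_j / (1 - a_l)`: under the product measure `μ(m) = ∏ l, p_l (m l)`,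
the expectation of the `j`-th coordinate `T(m) j = ∑ l, m l j`, namely
`∑_m T(m) j * μ(m)`, converges and equals `∑ l, A l j * a_j / (1 - a_l)`. -/
theorem expected_stationary_queue_length
    {J L R : Type*} [Fintype J] [Nonempty J] [Fintype L] [Nonempty L] [Fintype R]
    (A : L → J → ℝ) (hA : ∀ l j, 0 ≤ A l j)
    (route : R → List J) (hnodup : ∀ r, (route r).Nodup)
    (a : R → ℝ) (ha : ∀ r, 0 < a r)
    (aJ : J → ℝ) (haJ : ∀ j, aJ j = ∑ r : R, if j ∈ route r then a r else 0)
    (aL : L → ℝ) (haL : ∀ l, aL l = ∑ j, A l j * aJ j)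
    (hsub : ∀ l, aL l < 1)
    (j : J) :
    HasSum
      (fun m : L → J → ℕ => ((∑ l, m l j : ℕ) : ℝ) * ∏ l, pl (A l) aJ (aL l) (m l))
      (∑ l, A l j * aJ j / (1 - aL l)) :=
  expected_stationary_queue_length_general A hA route a ha aJ haJ aL haL hsub j
end

section
/- Representation of down-closed scheduling polytopes: let J be a finite nonempty set and let S ⊆ ℕ^J be a finite set of schedules that is downward closed (if σ ∈ S and σ' ∈ ℕ^J satisfies σ' ≤ σ componentwise, then σ' ∈ S) and contains the unit vector e_j for every j ∈ J. Then there exist a finite set L and nonnegative reals (A_{lj} : l ∈ L, j ∈ J) such that the convex hull of S in ℝ^J equals { s ∈ ℝ^J : s_j ≥ 0 for all j ∈ J and ∑_{j ∈ J} A_{lj} s_j ≤ 1 for all l ∈ L }. -/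
/-!
The anti-blocker `Q = {c ≥ 0 | c ⬝ᵥ x ≤ 1 for all x ∈ S}` of the schedules is a polyhedron, so it
has finitely many extreme points, and it is compact because `S` contains the unit vectors; these
extreme points are the rows of `A`. Every point of `conv S` satisfies the inequalities since the
rows lie in `Q`. Conversely, if `s ≥ 0` satisfies them, then by Krein–Milman `c ⬝ᵥ s ≤ 1` for all
`c ∈ Q`. Were `s` outside `conv S`, a separating functional, replaced by its positive part (which
downward closure permits) and rescaled, would be a point of `Q` with `c ⬝ᵥ s > 1`.
-/

open Set Filter Topology

section Polyhedron

variable {E I : Type*} [AddCommGroup E] [Module ℝ E]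

def polyhedron (f : I → E →ₗ[ℝ] ℝ) (b : I → ℝ) : Set E := {x | ∀ i, f i x ≤ b i}

variable [Finite I] {f : I → E →ₗ[ℝ] ℝ} {b : I → ℝ}

/-- The slack constraints stay satisfied near `x` along the line `x + t • d`, so `x` would lie
inside a segment of the polyhedron unless `d = 0`. -/
lemma eq_zero_of_mem_extremePoints_polyhedron {x d : E}
    (hx : x ∈ (polyhedron f b).extremePoints ℝ) (hd : ∀ i, f i x = b i → f i d = 0) :
    d = 0 := by
  have hnear : ∀ᶠ t in 𝓝 (0 : ℝ), x + t • d ∈ polyhedron f b := by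
    refine eventually_all.2 fun i => ?_
    simp only [map_add, map_smul, smul_eq_mul]
    rcases (hx.1 i).lt_or_eq with hslack | htight
    · have hcont : Continuous fun t : ℝ => f i x + t * f i d := by fun_prop
      filter_upwards [hcont.continuousAt.eventually_lt continuousAt_const (by simpa using hslack)]
        with t ht using ht.le
    · exact Eventually.of_forall fun t => by simp [hd i htight, htight]
  obtain ⟨ε, hε, hball⟩ := Metric.eventually_nhds_iff.1 hnear
  have hmem : ∀ t : ℝ, |t| < ε → x + t • d ∈ polyhedron f b := fun t ht =>
    hball (by simpa using ht)
  have hseg : x ∈ openSegment ℝ (x + (-(ε / 2)) • d) (x + (ε / 2) • d) :=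
    ⟨1 / 2, 1 / 2, by norm_num, by norm_num, by norm_num, by module⟩
  have hend := hx.2 (hmem _ (by rw [abs_neg, abs_of_pos (by positivity)]; linarith))
    (hmem _ (by rw [abs_of_pos (by positivity)]; linarith)) hseg
  rw [neg_smul, ← sub_eq_add_neg, sub_eq_self] at hend
  exact (smul_eq_zero.1 hend).resolve_left (by positivity)

/-- An extreme point is determined by its set of tight constraints. -/
theorem finite_extremePoints_polyhedron : ((polyhedron f b).extremePoints ℝ).Finite := by
  refine Finite.of_finite_image (f := fun x => {i | f i x = b i}) (toFinite _) ?_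
  intro x hx y _ hxy
  have htight : ∀ i, f i x = b i → f i y = b i := fun i hi => by
    simpa using (Set.ext_iff.1 hxy i).1 hi
  refine (sub_eq_zero.1 (eq_zero_of_mem_extremePoints_polyhedron hx (d := y - x) ?_)).symm
  intro i hi
  rw [map_sub, htight i hi, hi, sub_self]

end Polyhedron

theorem IsCompact.subset_of_extremePoints_subset {E : Type*} [AddCommGroup E] [Module ℝ E]
    [TopologicalSpace E] [T2Space E] [IsTopologicalAddGroup E] [ContinuousSMul ℝ E]
    [LocallyConvexSpace ℝ E] {K C : Set E} (hK : IsCompact K) (hKconv : Convex ℝ K)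
    (hC : IsClosed C) (hCconv : Convex ℝ C) (hKC : K.extremePoints ℝ ⊆ C) : K ⊆ C := by
  rw [← closure_convexHull_extremePoints hK hKconv]
  exact closure_minimal (convexHull_min hKC hCconv) hC

section Antiblocker

variable {J : Type*} [Fintype J]

lemma isClosed_setOf_dotProduct_le (x : J → ℝ) (r : ℝ) : IsClosed {c : J → ℝ | c ⬝ᵥ x ≤ r} :=
  isClosed_le (continuous_id.dotProduct continuous_const) continuous_const

lemma convex_setOf_dotProduct_le (x : J → ℝ) (r : ℝ) : Convex ℝ {c : J → ℝ | c ⬝ᵥ x ≤ r} :=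
  convex_halfSpace_le ((dotProductBilin ℝ ℝ).flip x).isLinear r

/-- Fulkerson's anti-blocker. -/
def antiblocker (X : Set (J → ℝ)) : Set (J → ℝ) := {c | 0 ≤ c ∧ ∀ x ∈ X, c ⬝ᵥ x ≤ 1}

variable {X : Set (J → ℝ)}

lemma antiblocker_eq_polyhedron :
    antiblocker X = polyhedron
      (Sum.elim (fun j => -LinearMap.proj j) fun x : X => (dotProductBilin ℝ ℝ).flip x)
      (Sum.elim 0 1) := by
  ext c
  simp [antiblocker, polyhedron, Sum.forall, Pi.le_def]

lemma antiblocker_eq_Ici_inter_iInter :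
    antiblocker X = Ici 0 ∩ ⋂ x ∈ X, {c | c ⬝ᵥ x ≤ 1} := by
  ext c
  simp [antiblocker]

lemma finite_extremePoints_antiblocker (hX : X.Finite) :
    ((antiblocker X).extremePoints ℝ).Finite := by
  have := hX.to_subtype
  rw [antiblocker_eq_polyhedron]
  exact finite_extremePoints_polyhedron

lemma convex_antiblocker : Convex ℝ (antiblocker X) := by
  rw [antiblocker_eq_Ici_inter_iInter]
  exact (convex_Ici 0).inter (convex_iInter₂ fun x _ => convex_setOf_dotProduct_le x 1)

lemma isClosed_antiblocker : IsClosed (antiblocker X) := by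
  rw [antiblocker_eq_Ici_inter_iInter]
  exact isClosed_Ici.inter (isClosed_biInter fun x _ => isClosed_setOf_dotProduct_le x 1)

lemma antiblocker_subset_Icc [DecidableEq J] (hX : ∀ j, Pi.single j 1 ∈ X) :
    antiblocker X ⊆ Icc 0 1 :=
  fun c hc => ⟨hc.1, fun j => by simpa using hc.2 _ (hX j)⟩

lemma isCompact_antiblocker [DecidableEq J] (hX : ∀ j, Pi.single j 1 ∈ X) :
    IsCompact (antiblocker X) :=
  isCompact_Icc.of_isClosed_subset isClosed_antiblocker (antiblocker_subset_Icc hX)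

lemma posPart_dotProduct_eq_dotProduct_indicator (c x : J → ℝ) :
    c⁺ ⬝ᵥ x = c ⬝ᵥ {j | 0 ≤ c j}.indicator x := by
  refine Finset.sum_congr rfl fun j _ => ?_
  by_cases hj : 0 ≤ c j
  · simp [hj, posPart_of_nonneg]
  · simp [hj, posPart_eq_zero.2 (not_le.1 hj).le]

theorem mem_closure_convexHull_of_forall_antiblocker (hne : X.Nonempty)
    (hind : ∀ x ∈ X, ∀ T : Set J, T.indicator x ∈ X) {s : J → ℝ} (hs : 0 ≤ s)
    (hQ : ∀ c ∈ antiblocker X, c ⬝ᵥ s ≤ 1) : s ∈ closure (convexHull ℝ X) := by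
  by_contra hsP
  obtain ⟨f, u, hfX, hfs⟩ :=
    geometric_hahn_banach_closed_point (convex_convexHull ℝ X).closure isClosed_closure hsP
  classical
  set c : J → ℝ := (dotProductEquiv ℝ J).symm f
  have hf : ∀ x, f x = c ⬝ᵥ x := fun x => by
    simp [c, ← dotProductEquiv_apply_apply]
  have hlt : ∀ x ∈ X, c ⬝ᵥ x < u := fun x hx => by
    simpa [hf] using hfX x (subset_closure (subset_convexHull ℝ X hx))
  have hu : 0 < u := by
    obtain ⟨x, hx⟩ := hne
    simpa using hlt _ (hind x hx ∅)
  have hmem : u⁻¹ • c⁺ ∈ antiblocker X := by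
    refine ⟨smul_nonneg (inv_nonneg.2 hu.le) (posPart_nonneg c), fun x hx => ?_⟩
    rw [smul_dotProduct, smul_eq_mul, inv_mul_le_one₀ hu,
      posPart_dotProduct_eq_dotProduct_indicator]
    exact (hlt _ (hind x hx _)).le
  have hgt : u < c⁺ ⬝ᵥ s :=
    (hf s ▸ hfs).trans_le (dotProduct_le_dotProduct_of_nonneg_right (le_posPart c) hs)
  have hle := hQ _ hmem
  rw [smul_dotProduct, smul_eq_mul, inv_mul_le_one₀ hu] at hle
  linarith

theorem convexHull_eq_antiblocker_extremePoints_antiblocker [DecidableEq J] (hfin : X.Finite)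
    (hne : X.Nonempty) (hnonneg : ∀ x ∈ X, 0 ≤ x)
    (hind : ∀ x ∈ X, ∀ T : Set J, T.indicator x ∈ X) (hunit : ∀ j, Pi.single j 1 ∈ X) :
    convexHull ℝ X = antiblocker ((antiblocker X).extremePoints ℝ) := by
  refine subset_antisymm
    (convexHull_min (fun x hx => ⟨hnonneg x hx, fun e he => ?_⟩) convex_antiblocker) ?_
  · rw [dotProduct_comm]
    exact (extremePoints_subset he).2 x hx
  rintro s ⟨hs, hext⟩
  rw [← (hfin.isClosed_convexHull (𝕜 := ℝ)).closure_eq]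
  refine mem_closure_convexHull_of_forall_antiblocker hne hind hs fun c hc => ?_
  refine (isCompact_antiblocker hunit).subset_of_extremePoints_subset convex_antiblocker
    (isClosed_setOf_dotProduct_le s 1) (convex_setOf_dotProduct_le s 1) (fun e he => ?_) hc
  simpa [dotProduct_comm] using hext e he

end Antiblocker

lemma indicator_mem_image_natCast {J : Type*} {S : Set (J → ℕ)}
    (hdown : ∀ σ ∈ S, ∀ σ' : J → ℕ, σ' ≤ σ → σ' ∈ S) :
    ∀ x ∈ (fun (σ : J → ℕ) (j : J) => (σ j : ℝ)) '' S, ∀ T : Set J,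
      T.indicator x ∈ (fun (σ : J → ℕ) (j : J) => (σ j : ℝ)) '' S := by
  rintro _ ⟨σ, hσ, rfl⟩ T
  classical
  refine ⟨T.indicator σ, hdown σ hσ _ fun j => ?_, ?_⟩
  · by_cases hj : j ∈ T <;> simp [hj]
  · ext j
    by_cases hj : j ∈ T <;> simp [hj]

/-- representation of down-closed scheduling polytopes: let `J` be a finite
nonempty set and `S ⊆ ℕ^J` a finite set of schedules that is downward closed and contains
every unit vector `e_j`.  Then there exist a finite set `L` (here `Fin n`) and nonnegative
reals `A` such that the convex hull of `S` in `ℝ^J` equals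
`{s : s j ≥ 0 ∀ j, and ∑_j A l j * s j ≤ 1 ∀ l}`. -/
theorem down_closed_polytope_representation
    {J : Type*} [Fintype J] [Nonempty J] [DecidableEq J]
    (S : Finset (J → ℕ))
    (hdown : ∀ σ ∈ S, ∀ σ' : J → ℕ, σ' ≤ σ → σ' ∈ S)
    (hunit : ∀ j : J, (fun j' => if j' = j then 1 else 0) ∈ S) :
    ∃ (n : ℕ) (A : Fin n → J → ℝ), (∀ l j, 0 ≤ A l j) ∧
      convexHull ℝ ((fun (σ : J → ℕ) (j : J) => (σ j : ℝ)) '' ↑S)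
        = {s : J → ℝ | (∀ j, 0 ≤ s j) ∧ ∀ l, ∑ j, A l j * s j ≤ 1} := by
  set X := (fun (σ : J → ℕ) (j : J) => (σ j : ℝ)) '' ↑S
  have hfin : X.Finite := S.finite_toSet.image _
  have hunitX : ∀ j, Pi.single j 1 ∈ X := fun j =>
    ⟨_, hunit j, by ext j'; simp [Pi.single_apply]⟩
  have hX := convexHull_eq_antiblocker_extremePoints_antiblocker hfin
    ⟨_, hunitX (Classical.arbitrary J)⟩ (by rintro _ ⟨σ, -, rfl⟩ j; positivity)
    (indicator_mem_image_natCast hdown) hunitX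
  obtain ⟨n, A, hA⟩ := (finite_extremePoints_antiblocker hfin).fin_embedding
  refine ⟨n, A, fun l => (extremePoints_subset (hA ▸ mem_range_self l : A l ∈ _)).1, ?_⟩
  rw [hX, ← hA]
  ext s
  simp [antiblocker, Pi.le_def, dotProduct, mul_comm]
end
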